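/- arXiv:2512.00433 — 5 statements merged into one kernel-verified Lean document; each statement's English description precedes it below -/
import Mathlib

section
/- Let 𝓕 be the exponential distance matrix of the complete bipartite graph K_{s,t} and let q be a nonzero indeterminate with q ≠ ±1. Then det(𝓕) = (1−q²)^{s+t−1}·[1 − q²(s−1)(t−1)]. -/
/-- The exponential distance matrix of a connected graph `G`:
the `(u,v)` entry is `q ^ d(u,v)`. -/
noncomputable def expDistMatrix {V : Type*} (G : SimpleGraph V) (q : ℝ) : Matrix V V ℝ :=
  Matrix.of fun u v => q ^ (G.dist u v)

/-!
The exponential distance matrix of `K_{V,W}` is `(1 - q²) I + S M Sᵀ`, where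
`M = !![q², q; q, q²]` and `S` is the `0/1` matrix recording on which side each vertex lies.
Sylvester's identity `det (c I_n + A B) = c ^ (n - 2) det (c I_2 + B A)`, which holds for every `c`
since it is an evaluation of `charpoly_mul_comm_of_le`, turns the determinant into that of
`(1 - q²) I + M Sᵀ S = (1 - q²) I + M diag (|V|, |W|)`.
-/

open Matrix Polynomial

theorem Matrix.det_scalar_add_mul_comm_of_card_le {m n R : Type*} [Fintype m] [Fintype n]
    [DecidableEq m] [DecidableEq n] [CommRing R] (c : R) (A : Matrix m n R) (B : Matrix n m R)
    (hle : Fintype.card n ≤ Fintype.card m) :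
    (scalar m c + A * B).det
      = c ^ (Fintype.card m - Fintype.card n) * (scalar n c + B * A).det := by
  have h := congrArg (eval c) (charpoly_mul_comm_of_le (-A) B hle)
  simpa [eval_charpoly, sub_eq_add_neg] using h

theorem Matrix.one_submatrix_mul_mul_one_submatrix {ι κ R : Type*} [Fintype κ] [DecidableEq κ]
    [NonAssocSemiring R] (f : ι → κ) (M : Matrix κ κ R) :
    (1 : Matrix κ κ R).submatrix f id * M * (1 : Matrix κ κ R).submatrix id f
      = M.submatrix f f := by
  rw [← submatrix_id_id M, ← Equiv.coe_refl, one_submatrix_mul, mul_submatrix_one]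
  rfl

namespace SimpleGraph

variable {V W : Type*}

theorem completeBipartiteGraph_dist_inl_inr (a : V) (b : W) :
    (completeBipartiteGraph V W).dist (.inl a) (.inr b) = 1 :=
  dist_eq_one_iff_adj.mpr (by simp)

theorem completeBipartiteGraph_dist_inr_inl (a : V) (b : W) :
    (completeBipartiteGraph V W).dist (.inr b) (.inl a) = 1 :=
  dist_eq_one_iff_adj.mpr (by simp)

theorem completeBipartiteGraph_dist_inl_inl [Nonempty W] {a a' : V} (h : a ≠ a') :
    (completeBipartiteGraph V W).dist (.inl a) (.inl a') = 2 := by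
  have hcommon : ((completeBipartiteGraph V W).commonNeighbors (.inl a) (.inl a')).Nonempty :=
    ⟨.inr (Classical.arbitrary W), by simp [mem_commonNeighbors]⟩
  rw [dist, edist_eq_two_iff.mpr ⟨by simpa using h, by simp, hcommon⟩]
  rfl

theorem completeBipartiteGraph_dist_inr_inr [Nonempty V] {b b' : W} (h : b ≠ b') :
    (completeBipartiteGraph V W).dist (.inr b) (.inr b') = 2 := by
  have hcommon : ((completeBipartiteGraph V W).commonNeighbors (.inr b) (.inr b')).Nonempty :=
    ⟨.inl (Classical.arbitrary V), by simp [mem_commonNeighbors]⟩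
  rw [dist, edist_eq_two_iff.mpr ⟨by simpa using h, by simp, hcommon⟩]
  rfl

end SimpleGraph

section CompleteBipartite

variable {V W : Type*}

def bipartiteSide (V W : Type*) : V ⊕ W → Fin 2 := Sum.elim 0 1

theorem one_submatrix_bipartiteSide_mul (R : Type*) [NonAssocSemiring R] [Fintype V]
    [Fintype W] :
    (1 : Matrix (Fin 2) (Fin 2) R).submatrix id (bipartiteSide V W)
      * (1 : Matrix (Fin 2) (Fin 2) R).submatrix (bipartiteSide V W) id
      = !![(Fintype.card V : R), 0; 0, Fintype.card W] := by
  ext i j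
  fin_cases i <;> fin_cases j <;>
    simp [bipartiteSide, mul_apply, Fintype.sum_sum_type, one_apply]

theorem expDistMatrix_completeBipartiteGraph [DecidableEq V] [DecidableEq W] [Nonempty V]
    [Nonempty W] (q : ℝ) :
    expDistMatrix (completeBipartiteGraph V W) q
      = diagonal (fun _ => 1 - q ^ 2)
        + !![q ^ 2, q; q, q ^ 2].submatrix (bipartiteSide V W) (bipartiteSide V W) := by
  ext (a | b) (a' | b')
  · rcases eq_or_ne a a' with rfl | h
    · simp [expDistMatrix, bipartiteSide]
    · simp [expDistMatrix, bipartiteSide, h, SimpleGraph.completeBipartiteGraph_dist_inl_inl h]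
  · simp [expDistMatrix, bipartiteSide, SimpleGraph.completeBipartiteGraph_dist_inl_inr]
  · simp [expDistMatrix, bipartiteSide, SimpleGraph.completeBipartiteGraph_dist_inr_inl]
  · rcases eq_or_ne b b' with rfl | h
    · simp [expDistMatrix, bipartiteSide]
    · simp [expDistMatrix, bipartiteSide, h, SimpleGraph.completeBipartiteGraph_dist_inr_inr h]

theorem det_expDistMatrix_completeBipartiteGraph [Fintype V] [Fintype W] [DecidableEq V]
    [DecidableEq W] [Nonempty V] [Nonempty W] (q : ℝ) :
    (expDistMatrix (completeBipartiteGraph V W) q).det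
      = (1 - q ^ 2) ^ (Fintype.card V + Fintype.card W - 1)
        * (1 - q ^ 2 * ((Fintype.card V : ℝ) - 1) * ((Fintype.card W : ℝ) - 1)) := by
  have h2 : Fintype.card (Fin 2) ≤ Fintype.card (V ⊕ W) := by
    simp only [Fintype.card_sum, Fintype.card_fin]
    linarith [Fintype.card_pos (α := V), Fintype.card_pos (α := W)]
  have hexp : Fintype.card V + Fintype.card W - 1
      = Fintype.card (V ⊕ W) - Fintype.card (Fin 2) + 1 := by
    simp only [Fintype.card_sum, Fintype.card_fin] at h2 ⊢
    omega
  have hcore : scalar (Fin 2) (1 - q ^ 2)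
        + !![q ^ 2, q; q, q ^ 2] * !![(Fintype.card V : ℝ), 0; 0, Fintype.card W]
      = !![1 - q ^ 2 + q ^ 2 * Fintype.card V, q * Fintype.card W;
          q * Fintype.card V, 1 - q ^ 2 + q ^ 2 * Fintype.card W] := by
    ext i j
    fin_cases i <;> fin_cases j <;> simp
  rw [expDistMatrix_completeBipartiteGraph, ← scalar_apply,
    ← one_submatrix_mul_mul_one_submatrix, Matrix.mul_assoc,
    det_scalar_add_mul_comm_of_card_le _ _ _ h2, Matrix.mul_assoc,
    one_submatrix_bipartiteSide_mul, hcore, det_fin_two_of, hexp, pow_succ]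
  ring

end CompleteBipartite

theorem det_expDistMatrix_completeBipartite_general (s t : ℕ) (hs : 0 < s) (ht : 0 < t)
    (q : ℝ) :
    (expDistMatrix (completeBipartiteGraph (Fin s) (Fin t)) q).det
      = (1 - q ^ 2) ^ (s + t - 1)
        * (1 - q ^ 2 * ((s : ℝ) - 1) * ((t : ℝ) - 1)) := by
  have : Nonempty (Fin s) := Fin.pos_iff_nonempty.mp hs
  have : Nonempty (Fin t) := Fin.pos_iff_nonempty.mp ht
  simpa using det_expDistMatrix_completeBipartiteGraph (V := Fin s) (W := Fin t) q

/-- `det 𝓕(K_{s,t}) = (1-q²)^(s+t-1) * (1 - q²(s-1)(t-1))`. -/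
theorem det_expDistMatrix_completeBipartite (s t : ℕ) (hs : 0 < s) (ht : 0 < t)
    (q : ℝ) (hq0 : q ≠ 0) (hq1 : q ≠ 1) (hq1' : q ≠ -1) :
    (expDistMatrix (completeBipartiteGraph (Fin s) (Fin t)) q).det
      = (1 - q ^ 2) ^ (s + t - 1)
        * (1 - q ^ 2 * ((s : ℝ) - 1) * ((t : ℝ) - 1)) :=
  det_expDistMatrix_completeBipartite_general s t hs ht q
end

section
/- Let G be a connected bi-block graph with blocks K_{m_i,n_i} for i = 1,…,r on n = Σ_{i=1}^r (m_i + n_i) − (r−1) vertices, let q be a nonzero indeterminate with q ≠ ±1, and let 𝓕 be the exponential distance matrix of G. Then det(𝓕) = (1−q²)^{n−1} · Π_{i=1}^r [1 − q²(m_i−1)(n_i−1)]. -/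
/-- `G` is a bi-block graph whose blocks are the complete bipartite graphs on the
vertex bipartitions `X i ∪ Y i`, `i = 1, …, r`: each block is nonempty and induces a
complete bipartite graph, every edge of `G` lies in a block, the blocks cover all
vertices, two distinct blocks share at most one vertex, and `G` is connected. -/
structure IsBiBlockGraph {V : Type*} [Fintype V] [DecidableEq V] (G : SimpleGraph V)
    (r : ℕ) (X Y : Fin r → Finset V) : Prop where
  connected : G.Connected
  nonemptyX : ∀ i, (X i).Nonempty
  nonemptyY : ∀ i, (Y i).Nonempty
  disjointXY : ∀ i, Disjoint (X i) (Y i)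
  adj_iff : ∀ u v, G.Adj u v ↔
    ∃ i, (u ∈ X i ∧ v ∈ Y i) ∨ (u ∈ Y i ∧ v ∈ X i)
  covers : ∀ v : V, ∃ i, v ∈ X i ∪ Y i
  inter_le_one : ∀ i j, i ≠ j → ((X i ∪ Y i) ∩ (X j ∪ Y j)).card ≤ 1
  card_eq : Fintype.card V + r = (∑ i, ((X i).card + (Y i).card)) + 1

/-!
If every entry `𝓕 x y` with `x ∈ S` and `y ∉ S` factors as `𝓕 x v * 𝓕 v y` through a vertex
`v ∉ S`, eliminating `S` against the row of `v` splits `det 𝓕` into the determinant of the Schur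
complement `𝓕 x x' - 𝓕 x v * 𝓕 v x'` on `S` and the determinant of `𝓕` on the complement of `S`.

Counting blocks through each vertex, `∑_w (#blocks through w - 1) = r - 1`, so some block contains
at most one vertex shared with other blocks, and for `r ≥ 2` by connectivity exactly one, `v`.
Taking `S` to be the other vertices of this pendant block `K_{m,n}`, every path leaving `S` passes
through `v`, so distances factor through `v`; the Schur complement is `(1 - q²)` times a rank-two
perturbation of the identity, of determinant `(1 - q²)^(m+n-1) (1 - q²(m-1)(n-1))`; and the
complement of `S` is a bi-block graph with the remaining `r - 1` blocks and the same distances.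
Induction on `r`.
-/

open Finset SimpleGraph

namespace Matrix

variable {V R : Type*} [Fintype V] [DecidableEq V] [CommRing R]

theorem det_eq_det_mul_det_of_factorsThrough (M : Matrix V V R) {S : Finset V} {v : V}
    (hv : v ∉ S) (hM : ∀ x ∈ S, ∀ y ∉ S, M x y = M x v * M v y) :
    M.det = (of fun x x' : S => M x x' - M x v * M v x').det *
      (M.submatrix ((↑) : {w // w ∉ S} → V) (↑)).det := by
  let e : S ⊕ {w // w ∉ S} ≃ V := Equiv.sumCompl (· ∈ S)
  let v' : {w // w ∉ S} := ⟨v, hv⟩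
  let F : Matrix S {w // w ∉ S} R := of fun x y => if y = v' then -M x v else 0
  have hF : ∀ (x : S) (g : {w // w ∉ S} → R), ∑ y, F x y * g y = -M x v * g v' := by
    intro x g
    simp [F, ite_mul]
  have hE : fromBlocks 1 F 0 1 * M.submatrix e e =
      fromBlocks (of fun x x' : S => M x x' - M x v * M v x') 0
        (M.submatrix (↑) (↑)) (M.submatrix (↑) (↑)) := by
    rw [← fromBlocks_toBlocks (M.submatrix e e), fromBlocks_multiply]
    refine fromBlocks_inj.mpr ⟨?_, ?_, ?_, ?_⟩ <;> ext x y <;>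
      simp [mul_apply, hF, e, v', toBlocks₁₁, toBlocks₁₂, toBlocks₂₁, toBlocks₂₂]
    · ring
    · rw [hM x x.2 y y.2, add_neg_cancel]
  calc M.det = (M.submatrix e e).det := (det_submatrix_equiv_self e M).symm
    _ = (fromBlocks 1 F 0 1 * M.submatrix e e).det := by
      rw [det_mul, det_fromBlocks_zero₂₁, det_one, det_one, one_mul, one_mul]
    _ = _ := by rw [hE, det_fromBlocks_zero₁₂]

/-- The Schur complement, at a vertex on the side of `A`, of the exponential distance matrix of
the complete bipartite graph with sides `A ∪ {v}` and `Aᶜ`. -/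
theorem det_completeBipartite_schur (A : Finset V) (q : R) :
    (of fun u w : V => (if u = w then 1 else if (u ∈ A ↔ w ∈ A) then q ^ 2 else q)
        - (if u ∈ A then q ^ 2 else q) * (if w ∈ A then q ^ 2 else q)).det
      = (1 - q ^ 2) ^ Fintype.card V * (1 - q ^ 2 * #A * (#Aᶜ - 1)) := by
  let U : Matrix V (Fin 2) R := of fun u j => if (u ∈ A ↔ j = 0) then 1 else 0
  let K : Matrix (Fin 2) (Fin 2) R := !![q ^ 2, q; q, 0]
  have hM : (of fun u w : V => (if u = w then 1 else if (u ∈ A ↔ w ∈ A) then q ^ 2 else q)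
        - (if u ∈ A then q ^ 2 else q) * (if w ∈ A then q ^ 2 else q))
      = (1 - q ^ 2) • (1 + U * (K * Uᵀ)) := by
    ext u w
    simp only [smul_apply, add_apply, one_apply, mul_apply, Fin.sum_univ_two, transpose_apply]
    by_cases hu : u ∈ A <;> by_cases hw : w ∈ A <;> by_cases huw : u = w <;>
      simp [U, K, hu, hw, huw] <;> ring
  have hUU : Uᵀ * U = !![(#A : R), 0; 0, (#Aᶜ : R)] := by
    ext i j
    simp only [mul_apply, transpose_apply, U, of_apply, ite_zero_mul_ite_zero, mul_one,
      Finset.sum_boole]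
    fin_cases i <;> fin_cases j <;> simp [Finset.filter_not, compl_eq_univ_sdiff]
  rw [hM, det_smul, det_one_add_mul_comm, Matrix.mul_assoc, hUU, det_fin_two]
  simp [K]
  ring

end Matrix

namespace Finset

variable {ι V : Type*} [Fintype ι] [Fintype V] [DecidableEq V]

theorem sum_card_filter_eq_sum_card_filter_mem (B : ι → Finset V) (P : V → Prop)
    [DecidablePred P] :
    ∑ i, #{w ∈ B i | P w} = ∑ w with P w, #{j | w ∈ B j} := by
  simp only [card_eq_sum_ones]
  exact sum_comm' fun i w => by simp [and_comm]

/-- With `deg w = #{j | w ∈ B j}`, the hypotheses give `∑ w, (deg w - 1) = card ι - 1`, and a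
shared vertex has `deg w ≤ 2 (deg w - 1)`: the blocks contain fewer than `2 * card ι` shared
vertices in total. -/
theorem exists_card_shared_le_one [Nonempty ι] (B : ι → Finset V) (hcover : ∀ v, ∃ i, v ∈ B i)
    (hcard : Fintype.card V + Fintype.card ι = ∑ i, #(B i) + 1) :
    ∃ i, #{w ∈ B i | 1 < #{j | w ∈ B j}} ≤ 1 := by
  set deg : V → ℕ := fun w => #{j | w ∈ B j}
  have hdeg : ∀ w, 1 ≤ deg w := fun w =>
    let ⟨i, hi⟩ := hcover w
    card_pos.2 ⟨i, by simp [hi]⟩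
  have hsum : ∑ w, (deg w - 1) = Fintype.card ι - 1 := by
    have : ∑ w, deg w = ∑ i, #(B i) := by
      simpa using (sum_card_filter_eq_sum_card_filter_mem B fun _ => True).symm
    rw [sum_tsub_distrib _ fun w _ => hdeg w]
    simp only [sum_const, card_univ, smul_eq_mul, mul_one]
    omega
  have hlt : ∑ i, #{w ∈ B i | 1 < deg w} < ∑ _i : ι, 2 := by
    calc ∑ i, #{w ∈ B i | 1 < deg w} = ∑ w with 1 < deg w, deg w :=
          sum_card_filter_eq_sum_card_filter_mem B _
      _ ≤ ∑ w, 2 * (deg w - 1) := by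
          rw [sum_filter]
          exact sum_le_sum fun w _ => by split_ifs <;> omega
      _ < ∑ _i : ι, 2 := by
          rw [← mul_sum, hsum, sum_const, card_univ, smul_eq_mul]
          have := Fintype.card_pos (α := ι)
          omega
  obtain ⟨i, -, hi⟩ := exists_lt_of_sum_lt hlt
  exact ⟨i, Nat.le_of_lt_succ hi⟩

end Finset

theorem Fintype.card_setOf_notMem {V : Type*} [Fintype V] [DecidableEq V] (S : Finset V) :
    Fintype.card {w | w ∉ S} = Fintype.card V - #S := by
  simp [filter_not, ← compl_eq_univ_sdiff, card_compl]

@[simp]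
theorem expDistMatrix_apply {V : Type*} (G : SimpleGraph V) (q : ℝ) (u v : V) :
    expDistMatrix G q u v = q ^ G.dist u v :=
  rfl

theorem det_expDistMatrix_of_card_eq_one {V : Type*} [Fintype V] [DecidableEq V]
    (G : SimpleGraph V) (q : ℝ) (h : Fintype.card V = 1) : (expDistMatrix G q).det = 1 := by
  obtain ⟨v, -⟩ := Fintype.card_eq_one_iff.1 h
  simp [Matrix.det_eq_elem_of_card_eq_one h v]

namespace IsBiBlockGraph

variable {V : Type*} [Fintype V] [DecidableEq V] {G : SimpleGraph V} {r : ℕ}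
  {X Y : Fin r → Finset V}

theorem swap (hG : IsBiBlockGraph G r X Y) : IsBiBlockGraph G r Y X where
  connected := hG.connected
  nonemptyX := hG.nonemptyY
  nonemptyY := hG.nonemptyX
  disjointXY i := (hG.disjointXY i).symm
  adj_iff u v := (hG.adj_iff u v).trans (exists_congr fun _ => or_comm)
  covers v := by simpa only [union_comm] using hG.covers v
  inter_le_one i j := by simpa only [union_comm] using hG.inter_le_one i j
  card_eq := by simpa only [add_comm (#(X _))] using hG.card_eq

theorem ne_zero (hG : IsBiBlockGraph G r X Y) : r ≠ 0 := by
  rintro rfl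
  have : Fintype.card V = 1 := by simpa using hG.card_eq
  obtain ⟨v⟩ := Fintype.card_pos_iff.mp (by omega : 0 < Fintype.card V)
  exact (hG.covers v).elim fun i _ => i.elim0

theorem card_block (hG : IsBiBlockGraph G r X Y) (i : Fin r) :
    #(X i ∪ Y i) = #(X i) + #(Y i) :=
  card_union_of_disjoint (hG.disjointXY i)

theorem exists_block_of_adj (hG : IsBiBlockGraph G r X Y) {u w : V} (h : G.Adj u w) :
    ∃ i, u ∈ X i ∪ Y i ∧ w ∈ X i ∪ Y i := by
  obtain ⟨i, hi⟩ := (hG.adj_iff u w).mp h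
  exact ⟨i, by rcases hi with ⟨hu, hw⟩ | ⟨hu, hw⟩ <;> simp [hu, hw]⟩

theorem eq_of_mem_block (hG : IsBiBlockGraph G r X Y) {u w : V} {i j : Fin r} (huw : u ≠ w)
    (hui : u ∈ X i ∪ Y i) (hwi : w ∈ X i ∪ Y i) (huj : u ∈ X j ∪ Y j) (hwj : w ∈ X j ∪ Y j) :
    i = j := by
  by_contra hij
  have h2 : #{u, w} ≤ #((X i ∪ Y i) ∩ (X j ∪ Y j)) :=
    card_le_card <| insert_subset (mem_inter.2 ⟨hui, huj⟩) <|
      singleton_subset_iff.2 (mem_inter.2 ⟨hwi, hwj⟩)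
  have := hG.inter_le_one i j hij
  rw [card_pair huw] at h2
  omega

theorem adj_of_mem_X_of_mem_Y (hG : IsBiBlockGraph G r X Y) {u w : V} {i : Fin r}
    (hu : u ∈ X i) (hw : w ∈ Y i) : G.Adj u w :=
  (hG.adj_iff u w).mpr ⟨i, .inl ⟨hu, hw⟩⟩

theorem not_adj_of_mem_X (hG : IsBiBlockGraph G r X Y) {u w : V} {i : Fin r}
    (hu : u ∈ X i) (hw : w ∈ X i) : ¬G.Adj u w := by
  intro h
  obtain ⟨j, hj⟩ := (hG.adj_iff u w).mp h
  obtain rfl : i = j := hG.eq_of_mem_block h.ne (mem_union_left _ hu) (mem_union_left _ hw)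
    (by rcases hj with ⟨h1, _⟩ | ⟨h1, _⟩ <;> simp [h1])
    (by rcases hj with ⟨_, h2⟩ | ⟨_, h2⟩ <;> simp [h2])
  rcases hj with ⟨-, hw'⟩ | ⟨hu', -⟩
  · exact disjoint_left.mp (hG.disjointXY i) hw hw'
  · exact disjoint_left.mp (hG.disjointXY i) hu hu'

theorem dist_eq_two_of_mem_X (hG : IsBiBlockGraph G r X Y) {u w : V} {i : Fin r}
    (huw : u ≠ w) (hu : u ∈ X i) (hw : w ∈ X i) : G.dist u w = 2 := by
  obtain ⟨y, hy⟩ := hG.nonemptyY i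
  have hle : G.dist u w ≤ 2 := dist_le
    ((Walk.nil.cons (hG.adj_of_mem_X_of_mem_Y hw hy).symm).cons (hG.adj_of_mem_X_of_mem_Y hu hy))
  have := hG.connected.one_lt_dist_of_ne_of_not_adj huw (hG.not_adj_of_mem_X hu hw)
  omega

theorem dist_of_mem_block (hG : IsBiBlockGraph G r X Y) {u w : V} {i : Fin r}
    (hu : u ∈ X i ∪ Y i) (hw : w ∈ X i ∪ Y i) :
    G.dist u w = if u = w then 0 else if (u ∈ X i ↔ w ∈ X i) then 2 else 1 := by
  rcases eq_or_ne u w with rfl | huw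
  · simp
  have hY : ∀ x ∈ X i ∪ Y i, x ∉ X i → x ∈ Y i := fun x hx => (mem_union.1 hx).resolve_left
  rw [if_neg huw]
  by_cases hu' : u ∈ X i <;> by_cases hw' : w ∈ X i
  · rw [if_pos (iff_of_true hu' hw'), hG.dist_eq_two_of_mem_X huw hu' hw']
  · rw [if_neg (by tauto), dist_eq_one_iff_adj]
    exact hG.adj_of_mem_X_of_mem_Y hu' (hY w hw hw')
  · rw [if_neg (by tauto), dist_eq_one_iff_adj]
    exact (hG.adj_of_mem_X_of_mem_Y hw' (hY u hu hu')).symm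
  · rw [if_pos (iff_of_false hu' hw'),
      hG.swap.dist_eq_two_of_mem_X huw (hY u hu hu') (hY w hw hw')]

theorem expDistMatrix_of_mem_block (hG : IsBiBlockGraph G r X Y) (q : ℝ) {u w : V}
    {i : Fin r} (hu : u ∈ X i ∪ Y i) (hw : w ∈ X i ∪ Y i) :
    expDistMatrix G q u w = if u = w then 1 else if (u ∈ X i ↔ w ∈ X i) then q ^ 2 else q := by
  rw [expDistMatrix_apply, hG.dist_of_mem_block hu hw]
  split_ifs <;> simp

theorem det_schur_block_of_mem_X (hG : IsBiBlockGraph G r X Y) {i : Fin r} {v : V}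
    (hv : v ∈ X i) (q : ℝ) :
    (Matrix.of fun x x' : ((X i ∪ Y i).erase v) =>
        expDistMatrix G q x x' - expDistMatrix G q x v * expDistMatrix G q v x').det
      = (1 - q ^ 2) ^ #((X i ∪ Y i).erase v) * (1 - q ^ 2 * (#(X i) - 1) * (#(Y i) - 1)) := by
  set S := (X i ∪ Y i).erase v
  have hvB : v ∈ X i ∪ Y i := mem_union_left _ hv
  have hSB : ∀ x : S, (x : V) ∈ X i ∪ Y i := fun x => mem_of_mem_erase x.2
  let A : Finset S := (X i).subtype (· ∈ S)
  have hA : ∀ x : S, x ∈ A ↔ (x : V) ∈ X i := fun x => mem_subtype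
  have hM : (Matrix.of fun x x' : S =>
        expDistMatrix G q x x' - expDistMatrix G q x v * expDistMatrix G q v x') =
      Matrix.of fun x x' : S => (if x = x' then 1 else if (x ∈ A ↔ x' ∈ A) then q ^ 2 else q)
        - (if x ∈ A then q ^ 2 else q) * (if x' ∈ A then q ^ 2 else q) := by
    ext x x'
    simp only [Matrix.of_apply, hG.expDistMatrix_of_mem_block q (hSB x) (hSB x'),
      hG.expDistMatrix_of_mem_block q (hSB x) hvB, hG.expDistMatrix_of_mem_block q hvB (hSB x'),
      hA, Subtype.ext_iff, ne_of_mem_erase x.2, (ne_of_mem_erase x'.2).symm, hv, iff_true,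
      true_iff, if_false]
  have hAcard : #A + 1 = #(X i) := by
    rw [card_subtype, ← card_erase_add_one hv]
    congr 2
    ext x
    simp only [S, mem_filter, mem_erase, mem_union]
    tauto
  have hAcompl : #Aᶜ = #(Y i) := by
    have := card_erase_of_mem hvB
    rw [card_compl, Fintype.card_coe, this, hG.card_block]
    omega
  rw [hM, Matrix.det_completeBipartite_schur, Fintype.card_coe, hAcompl, ← hAcard]
  push_cast
  ring

theorem det_schur_block (hG : IsBiBlockGraph G r X Y) {i : Fin r} {v : V}
    (hv : v ∈ X i ∪ Y i) (q : ℝ) :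
    (Matrix.of fun x x' : ((X i ∪ Y i).erase v) =>
        expDistMatrix G q x x' - expDistMatrix G q x v * expDistMatrix G q v x').det
      = (1 - q ^ 2) ^ #((X i ∪ Y i).erase v) * (1 - q ^ 2 * (#(X i) - 1) * (#(Y i) - 1)) := by
  rcases mem_union.1 hv with hv | hv
  · exact hG.det_schur_block_of_mem_X hv q
  · rw [union_comm, hG.swap.det_schur_block_of_mem_X hv q]
    ring

end IsBiBlockGraph

def IsPendantAt {V : Type*} [DecidableEq V] {r : ℕ} (X Y : Fin r → Finset V) (i : Fin r)
    (v : V) : Prop :=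
  ∀ w ∈ (X i ∪ Y i).erase v, ∀ j, w ∈ X j ∪ Y j → j = i

namespace IsPendantAt

variable {V : Type*} [DecidableEq V] {r : ℕ}

theorem notMem_erase {X Y : Fin r → Finset V} {i j : Fin r} {v w : V}
    (hp : IsPendantAt X Y i v) (hji : j ≠ i) (hw : w ∈ X j ∪ Y j) :
    w ∉ (X i ∪ Y i).erase v :=
  fun hwS => hji (hp w hwS j hw)

variable {X Y : Fin (r + 1) → Finset V} {i : Fin (r + 1)} {v : V}

theorem card_subtype_X (hp : IsPendantAt X Y i v) (j : Fin r) :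
    #((X (i.succAbove j)).subtype (· ∉ (X i ∪ Y i).erase v)) = #(X (i.succAbove j)) := by
  rw [card_subtype, filter_true_of_mem fun x hx =>
    hp.notMem_erase (i.succAbove_ne j) (mem_union_left _ hx)]

theorem card_subtype_Y (hp : IsPendantAt X Y i v) (j : Fin r) :
    #((Y (i.succAbove j)).subtype (· ∉ (X i ∪ Y i).erase v)) = #(Y (i.succAbove j)) := by
  rw [card_subtype, filter_true_of_mem fun x hx =>
    hp.notMem_erase (i.succAbove_ne j) (mem_union_right _ hx)]

end IsPendantAt

namespace IsBiBlockGraph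

variable {V : Type*} [Fintype V] [DecidableEq V] {G : SimpleGraph V} {r : ℕ}
  {X Y : Fin r → Finset V} {i : Fin r} {v : V}

theorem exists_shared_vertex (hG : IsBiBlockGraph G r X Y) (hr : 1 < r) (i : Fin r) :
    ∃ v ∈ X i ∪ Y i, ∃ j ≠ i, v ∈ X j ∪ Y j := by
  obtain ⟨j, hji⟩ := Fintype.exists_ne_of_one_lt_card (by simpa using hr) i
  obtain ⟨z, hz⟩ := hG.nonemptyX j
  by_cases hzi : z ∈ X i ∪ Y i
  · exact ⟨z, hzi, j, hji, mem_union_left _ hz⟩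
  obtain ⟨u, hu⟩ := hG.nonemptyX i
  obtain ⟨d, -, hd₁, hd₂⟩ := (hG.connected u z).some.exists_boundary_dart
    (X i ∪ Y i : Finset V) (mem_union_left _ hu) hzi
  obtain ⟨k, hk₁, hk₂⟩ := hG.exists_block_of_adj d.adj
  exact ⟨d.fst, hd₁, k, by rintro rfl; exact hd₂ hk₂, hk₁⟩

theorem exists_isPendantAt (hG : IsBiBlockGraph G r X Y) :
    ∃ i, ∃ v ∈ X i ∪ Y i, (1 < r → ∃ j ≠ i, v ∈ X j ∪ Y j) ∧ IsPendantAt X Y i v := by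
  rcases Nat.lt_or_ge 1 r with hr | hr
  · have : Nonempty (Fin r) := ⟨⟨0, by omega⟩⟩
    obtain ⟨i, hi⟩ := exists_card_shared_le_one (fun i => X i ∪ Y i) hG.covers
      (by simpa only [Fintype.card_fin, hG.card_block] using hG.card_eq)
    obtain ⟨v, hvi, j, hji, hvj⟩ := hG.exists_shared_vertex hr i
    have hshared : ∀ w ∈ X i ∪ Y i, ∀ k ≠ i, w ∈ X k ∪ Y k →
        w ∈ {w ∈ X i ∪ Y i | 1 < #{j | w ∈ X j ∪ Y j}} := fun w hwi k hki hwk =>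
      mem_filter.2 ⟨hwi, one_lt_card.2 ⟨i, by simpa using hwi, k, by simpa using hwk, hki.symm⟩⟩
    refine ⟨i, v, hvi, fun _ => ⟨j, hji, hvj⟩, fun w hw k hwk => ?_⟩
    by_contra hki
    have := one_lt_card.2 ⟨w, hshared w (mem_of_mem_erase hw) k hki hwk,
      v, hshared v hvi j hji hvj, ne_of_mem_erase hw⟩
    omega
  · obtain rfl : r = 1 := by have := hG.ne_zero; omega
    obtain ⟨v, hv⟩ := hG.nonemptyX 0
    exact ⟨0, v, mem_union_left _ hv, fun h => absurd h (lt_irrefl 1),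
      fun _ _ j _ => Fin.fin_one_eq_zero j⟩

theorem mem_block_of_adj_of_isPendantAt (hG : IsBiBlockGraph G r X Y)
    (hp : IsPendantAt X Y i v) {x y : V} (hx : x ∈ (X i ∪ Y i).erase v) (h : G.Adj x y) :
    y ∈ X i ∪ Y i := by
  obtain ⟨k, hxk, hyk⟩ := hG.exists_block_of_adj h
  rwa [← hp x hx k hxk]

theorem mem_support_of_isPendantAt (hG : IsBiBlockGraph G r X Y) (hp : IsPendantAt X Y i v)
    {x y : V} (p : G.Walk x y) (hx : x ∈ (X i ∪ Y i).erase v) (hy : y ∉ (X i ∪ Y i).erase v) :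
    v ∈ p.support := by
  obtain ⟨d, hd, hd₁, hd₂⟩ := p.exists_boundary_dart ((X i ∪ Y i).erase v : Finset V) hx hy
  obtain rfl : d.snd = v := by
    by_contra hne
    exact hd₂ (mem_erase.2 ⟨hne, hG.mem_block_of_adj_of_isPendantAt hp hd₁ d.adj⟩)
  exact p.dart_snd_mem_support_of_mem_darts hd

theorem dist_eq_add_of_isPendantAt (hG : IsBiBlockGraph G r X Y) (hp : IsPendantAt X Y i v)
    {x y : V} (hx : x ∈ (X i ∪ Y i).erase v) (hy : y ∉ (X i ∪ Y i).erase v) :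
    G.dist x y = G.dist x v + G.dist v y := by
  obtain ⟨p, -, hlen⟩ := hG.connected.exists_path_of_dist x y
  have hv := hG.mem_support_of_isPendantAt hp p hx hy
  refine le_antisymm hG.connected.dist_triangle ?_
  calc G.dist x v + G.dist v y ≤ (p.takeUntil v hv).length + (p.dropUntil v hv).length :=
        add_le_add (dist_le _) (dist_le _)
    _ = G.dist x y := by rw [← Walk.length_append, Walk.take_spec, hlen]

/-- A path visiting the pendant block away from `v` would pass through `v` on both sides. -/
theorem notMem_of_mem_support_of_isPath (hG : IsBiBlockGraph G r X Y)
    (hp : IsPendantAt X Y i v) {x y : V} {p : G.Walk x y} (hpath : p.IsPath)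
    (hx : x ∉ (X i ∪ Y i).erase v) (hy : y ∉ (X i ∪ Y i).erase v) :
    ∀ z ∈ p.support, z ∉ (X i ∪ Y i).erase v := by
  intro z hz hzS
  have h₁ : v ∈ (p.takeUntil z hz).support := by
    simpa using hG.mem_support_of_isPendantAt hp (p.takeUntil z hz).reverse hzS hx
  have h₂ : v ∈ (p.dropUntil z hz).support.tail := by
    have := hG.mem_support_of_isPendantAt hp (p.dropUntil z hz) hzS hy
    rw [← Walk.cons_tail_support] at this
    exact (List.mem_cons.1 this).resolve_left (ne_of_mem_erase hzS).symm
  have hnodup := hpath.support_nodup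
  rw [← p.take_spec hz, Walk.support_append] at hnodup
  exact List.disjoint_of_nodup_append hnodup h₁ h₂

theorem exists_walk_induce_of_isPendantAt (hG : IsBiBlockGraph G r X Y)
    (hp : IsPendantAt X Y i v) (a b : {w // w ∉ (X i ∪ Y i).erase v}) :
    ∃ p : (G.induce {w | w ∉ (X i ∪ Y i).erase v}).Walk a b, p.length = G.dist a b := by
  obtain ⟨p, hpath, hlen⟩ := hG.connected.exists_path_of_dist a b
  have hs := hG.notMem_of_mem_support_of_isPath hp hpath a.2 b.2
  refine ⟨p.induce {w | w ∉ (X i ∪ Y i).erase v} hs, ?_⟩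
  have := congrArg Walk.length (p.map_induce (s := {w | w ∉ (X i ∪ Y i).erase v}) hs)
  rw [Walk.length_map] at this
  exact this.trans hlen

theorem dist_induce_of_isPendantAt (hG : IsBiBlockGraph G r X Y) (hp : IsPendantAt X Y i v)
    (a b : {w // w ∉ (X i ∪ Y i).erase v}) :
    (G.induce {w | w ∉ (X i ∪ Y i).erase v}).dist a b = G.dist a b := by
  obtain ⟨p, hlen⟩ := hG.exists_walk_induce_of_isPendantAt hp a b
  obtain ⟨p', hlen'⟩ := p.reachable.exists_walk_length_eq_dist
  refine le_antisymm (hlen ▸ dist_le p) ?_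
  calc G.dist a b ≤ (p'.map (Embedding.induce _).toHom).length := dist_le _
    _ = _ := by rw [Walk.length_map, hlen']

theorem expDistMatrix_induce_of_isPendantAt (hG : IsBiBlockGraph G r X Y)
    (hp : IsPendantAt X Y i v) (q : ℝ) :
    expDistMatrix (G.induce {w | w ∉ (X i ∪ Y i).erase v}) q =
      (expDistMatrix G q).submatrix ((↑) : {w // w ∉ (X i ∪ Y i).erase v} → V) (↑) := by
  ext a b
  simp [hG.dist_induce_of_isPendantAt hp]

theorem det_expDistMatrix_eq_of_isPendantAt (hG : IsBiBlockGraph G r X Y)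
    (hp : IsPendantAt X Y i v) (hv : v ∈ X i ∪ Y i) (q : ℝ) :
    (expDistMatrix G q).det = (1 - q ^ 2) ^ #((X i ∪ Y i).erase v) *
      (1 - q ^ 2 * (#(X i) - 1) * (#(Y i) - 1)) *
      (expDistMatrix (G.induce {w | w ∉ (X i ∪ Y i).erase v}) q).det := by
  rw [hG.expDistMatrix_induce_of_isPendantAt hp q, ← hG.det_schur_block hv]
  refine Matrix.det_eq_det_mul_det_of_factorsThrough _ (notMem_erase v _) fun x hx y hy => ?_
  simp only [expDistMatrix_apply, ← pow_add, hG.dist_eq_add_of_isPendantAt hp hx hy]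

section Succ

variable {X Y : Fin (r + 1) → Finset V} {i : Fin (r + 1)}

theorem induce_of_isPendantAt (hG : IsBiBlockGraph G (r + 1) X Y) (hp : IsPendantAt X Y i v)
    (hv : v ∈ X i ∪ Y i) (hcut : ∃ j ≠ i, v ∈ X j ∪ Y j) :
    IsBiBlockGraph (G.induce {w | w ∉ (X i ∪ Y i).erase v}) r
      (fun j => (X (i.succAbove j)).subtype (· ∉ (X i ∪ Y i).erase v))
      (fun j => (Y (i.succAbove j)).subtype (· ∉ (X i ∪ Y i).erase v)) where
  connected := (connected_iff _).2
    ⟨fun a b => (hG.exists_walk_induce_of_isPendantAt hp a b).elim fun p _ => p.reachable,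
      ⟨⟨v, notMem_erase v _⟩⟩⟩
  nonemptyX j :=
    let ⟨x, hx⟩ := hG.nonemptyX (i.succAbove j)
    ⟨⟨x, hp.notMem_erase (i.succAbove_ne j) (mem_union_left _ hx)⟩, mem_subtype.2 hx⟩
  nonemptyY j :=
    let ⟨y, hy⟩ := hG.nonemptyY (i.succAbove j)
    ⟨⟨y, hp.notMem_erase (i.succAbove_ne j) (mem_union_right _ hy)⟩, mem_subtype.2 hy⟩
  disjointXY j := disjoint_left.2 fun a ha hb =>
    disjoint_left.1 (hG.disjointXY _) (mem_subtype.1 ha) (mem_subtype.1 hb)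
  adj_iff a b := by
    simp only [induce_adj, mem_subtype]
    rw [hG.adj_iff, Fin.exists_iff_succAbove i, or_iff_right]
    have hXY : ∀ x y : {w // w ∉ (X i ∪ Y i).erase v}, ↑x ∈ X i → ↑y ∈ Y i → False := by
      intro x y hx hy
      rw [eq_of_mem_of_notMem_erase (mem_union_left _ hx) x.2] at hx
      rw [eq_of_mem_of_notMem_erase (mem_union_right _ hy) y.2] at hy
      exact disjoint_left.1 (hG.disjointXY i) hx hy
    rintro (⟨hax, hby⟩ | ⟨hay, hbx⟩)
    exacts [hXY a b hax hby, hXY b a hbx hay]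
  covers a := by
    obtain ⟨k, hk⟩ := hG.covers a
    rcases Fin.eq_self_or_eq_succAbove i k with rfl | ⟨j, rfl⟩
    · obtain ⟨j, hjk, hvj⟩ := hcut
      obtain ⟨j, rfl⟩ := Fin.exists_succAbove_eq hjk
      have hav : (a : V) = v := eq_of_mem_of_notMem_erase hk a.2
      exact ⟨j, by simpa [hav] using hvj⟩
    · exact ⟨j, by simpa using hk⟩
  inter_le_one j k hjk := by
    refine (card_le_card_of_injOn Subtype.val (fun x hx => ?_) Subtype.val_injective.injOn).trans
      (hG.inter_le_one (i.succAbove j) (i.succAbove k) (Fin.succAbove_right_injective.ne hjk))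
    simpa [mem_subtype] using hx
  card_eq := by
    have hS := card_erase_add_one hv
    have hle := card_le_univ ((X i ∪ Y i).erase v)
    have hcard := hG.card_eq
    rw [Fin.sum_univ_succAbove _ i] at hcard
    rw [Fintype.card_setOf_notMem]
    simp only [hp.card_subtype_X, hp.card_subtype_Y]
    rw [hG.card_block] at hS
    omega

end Succ

end IsBiBlockGraph

theorem IsBiBlockGraph.det_expDistMatrix {V : Type*} [Fintype V] [DecidableEq V]
    {G : SimpleGraph V} {r : ℕ} {X Y : Fin r → Finset V} (hG : IsBiBlockGraph G r X Y)
    (q : ℝ) :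
    (expDistMatrix G q).det = (1 - q ^ 2) ^ (Fintype.card V - 1) *
      ∏ i, (1 - q ^ 2 * (#(X i) - 1) * (#(Y i) - 1)) := by
  induction r generalizing V with
  | zero => exact absurd rfl hG.ne_zero
  | succ r ih =>
    obtain ⟨i, v, hv, hcut, hp⟩ := hG.exists_isPendantAt
    have hcard := Fintype.card_setOf_notMem ((X i ∪ Y i).erase v)
    have hlt : #((X i ∪ Y i).erase v) < Fintype.card V :=
      card_lt_univ_of_notMem (notMem_erase v _)
    rw [hG.det_expDistMatrix_eq_of_isPendantAt hp hv q, Fin.prod_univ_succAbove _ i]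
    rcases eq_or_ne r 0 with rfl | hr
    · have hS : #((X i ∪ Y i).erase v) + 1 = Fintype.card V := by
        have := hG.card_eq
        rw [Fin.sum_univ_succAbove _ i, univ_eq_empty, sum_empty] at this
        rw [card_erase_add_one hv, hG.card_block]
        omega
      rw [det_expDistMatrix_of_card_eq_one _ q (by omega),
        show Fintype.card V - 1 = #((X i ∪ Y i).erase v) by omega]
      simp
    · rw [ih (hG.induce_of_isPendantAt hp hv (hcut (by omega))), hcard]
      simp only [hp.card_subtype_X, hp.card_subtype_Y]
      rw [show Fintype.card V - 1 =
          #((X i ∪ Y i).erase v) + (Fintype.card V - #((X i ∪ Y i).erase v) - 1) by omega,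
        pow_add]
      ring

theorem det_expDistMatrix_biBlock_general {V : Type*} [Fintype V] [DecidableEq V]
    (G : SimpleGraph V) (r : ℕ) (X Y : Fin r → Finset V)
    (hG : IsBiBlockGraph G r X Y)
    (m n : Fin r → ℕ) (hm : ∀ i, (X i).card = m i) (hn : ∀ i, (Y i).card = n i)
    (N : ℕ) (hN : Fintype.card V = N)
    (q : ℝ) :
    (expDistMatrix G q).det
      = (1 - q ^ 2) ^ (N - 1)
        * ∏ i, (1 - q ^ 2 * ((m i : ℝ) - 1) * ((n i : ℝ) - 1)) := by
  simp only [hG.det_expDistMatrix q, hN, hm, hn]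

/-- Determinant of the exponential distance matrix of a bi-block graph with blocks
`K_{m_i,n_i}`: `det 𝓕 = (1-q²)^(n-1) · ∏ᵢ (1 - q²(mᵢ-1)(nᵢ-1))`. -/
theorem det_expDistMatrix_biBlock {V : Type*} [Fintype V] [DecidableEq V]
    (G : SimpleGraph V) (r : ℕ) (X Y : Fin r → Finset V)
    (hG : IsBiBlockGraph G r X Y)
    (m n : Fin r → ℕ) (hm : ∀ i, (X i).card = m i) (hn : ∀ i, (Y i).card = n i)
    (N : ℕ) (hN : Fintype.card V = N)
    (q : ℝ) (hq0 : q ≠ 0) (hq1 : q ≠ 1) (hq1' : q ≠ -1) :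
    (expDistMatrix G q).det
      = (1 - q ^ 2) ^ (N - 1)
        * ∏ i, (1 - q ^ 2 * ((m i : ℝ) - 1) * ((n i : ℝ) - 1)) :=
  det_expDistMatrix_biBlock_general G r X Y hG m n hm hn N hN q
end

section
/- Let T be a tree on n vertices and q a nonzero indeterminate with q ≠ ±1. Then the determinant of the exponential distance matrix 𝓕 of T, with entries 𝓕_{ij} = q^{d(i,j)}, equals (1−q²)^{n−1}. -/
namespace Matrix

variable {m R : Type*} [Fintype m] [DecidableEq m] [CommRing R]

theorem det_eq_mul_det_submatrix_compl_of_forall_ne_eq_zero {M : Matrix m m R} {i : m}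
    (h : ∀ j ≠ i, M i j = 0) :
    M.det = M i i * (M.submatrix ((↑) : ({i}ᶜ : Set m) → m) (↑)).det := by
  rw [twoBlockTriangular_det M (· ∈ ({i}ᶜ : Set m)) fun k hk j hj => by
    rw [Set.notMem_compl_iff, Set.mem_singleton_iff] at hk
    exact hk ▸ h j hj, mul_comm]
  congr 1
  have : Subsingleton {k // k ∉ ({i}ᶜ : Set m)} := ⟨fun a b => Subtype.ext <|
    (Set.notMem_compl_iff.mp a.2).trans (Set.notMem_compl_iff.mp b.2).symm⟩
  exact det_eq_elem_of_subsingleton _ (⟨i, by simp⟩ : {k // k ∉ ({i}ᶜ : Set m)})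

end Matrix

namespace SimpleGraph

variable {V : Type*} {G : SimpleGraph V}

theorem Reachable.dist_eq_dist_add_one_of_forall_adj_eq {u v w : V} (h : G.Reachable v w)
    (hw : w ≠ v) (hvu : G.Adj v u) (hu : ∀ x, G.Adj v x → x = u) :
    G.dist v w = G.dist u w + 1 := by
  refine le_antisymm ?_ ?_
  · have := (hvu.symm.reachable.trans h).dist_triangle_right v
    rwa [dist_eq_one_iff_adj.mpr hvu, add_comm] at this
  · obtain ⟨p, hp⟩ := h.exists_walk_length_eq_dist
    cases p with
    | nil => exact absurd rfl hw
    | cons hvx p =>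
      obtain rfl := hu _ hvx
      rw [← hp, Walk.length_cons]
      exact Nat.add_le_add_right (dist_le p) 1

@[simp]
theorem Walk.length_induce {s : Set V} {u v : V} (p : G.Walk u v)
    (hp : ∀ x ∈ p.support, x ∈ s) :
    (p.induce s hp).length = p.length := by
  induction p <;> simp [*]

theorem Preconnected.dist_induce_of_subsingleton_neighborSet (hG : G.Preconnected) {s : Set V}
    (hs : ∀ v ∉ s, (G.neighborSet v).Subsingleton) (u v : s) :
    (G.induce s).dist u v = G.dist u v := by
  obtain ⟨p, hp, hlen⟩ := (hG u v).exists_path_of_dist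
  have hps : ∀ x ∈ p.support, x ∈ s := fun x hx => by
    by_contra hxs
    exact hp.not_mem_support_of_subsingleton_neighborSet (by grind) (by grind) (hs x hxs) hx
  refine le_antisymm ?_ ?_
  · calc (G.induce s).dist u v ≤ (p.induce s hps).length := dist_le _
      _ = G.dist u v := by rw [Walk.length_induce, hlen]
  · obtain ⟨r, hr⟩ := Reachable.exists_walk_length_eq_dist ⟨p.induce s hps⟩
    calc G.dist u v ≤ (r.map (Embedding.induce s).toHom).length := dist_le _
      _ = (G.induce s).dist u v := by rw [Walk.length_map, hr]

theorem IsTree.induce_compl_singleton_of_degree_eq_one (hG : G.IsTree) {v : V}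
    [Fintype (G.neighborSet v)] (hv : G.degree v = 1) : (G.induce {v}ᶜ).IsTree :=
  ⟨hG.connected.induce_compl_singleton_of_degree_eq_one hv, hG.isAcyclic.induce _⟩

open Matrix

theorem Preconnected.expDistMatrix_induce (hG : G.Preconnected) {s : Set V}
    (hs : ∀ v ∉ s, (G.neighborSet v).Subsingleton) (q : ℝ) :
    expDistMatrix (G.induce s) q = (expDistMatrix G q).submatrix (↑) (↑) := by
  ext u v
  simp [expDistMatrix, hG.dist_induce_of_subsingleton_neighborSet hs]

theorem Connected.det_expDistMatrix_eq_mul_det_induce [Fintype V] [DecidableEq V]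
    (hG : G.Connected) {u v : V} (hvu : G.Adj v u) (hu : ∀ x, G.Adj v x → x = u) (q : ℝ) :
    (expDistMatrix G q).det = (1 - q ^ 2) * (expDistMatrix (G.induce {v}ᶜ) q).det := by
  set F := expDistMatrix G q
  have hrow : ∀ w ≠ v, (F v + (-q) • F u) w = 0 := fun w hw => by
    simp [F, expDistMatrix, (hG v w).dist_eq_dist_add_one_of_forall_adj_eq hw hvu hu, pow_succ]
    ring
  have hleaf : ∀ x ∉ ({v}ᶜ : Set V), (G.neighborSet x).Subsingleton := fun x hx => by
    rw [Set.notMem_compl_iff, Set.mem_singleton_iff] at hx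
    exact hx ▸ Set.subsingleton_singleton.anti fun w hw => hu w hw
  rw [← det_updateRow_add_smul_self F hvu.ne (-q),
    det_eq_mul_det_submatrix_compl_of_forall_ne_eq_zero (i := v)
      fun w hw => by rw [updateRow_self, hrow w hw],
    hG.preconnected.expDistMatrix_induce hleaf]
  congr 1
  · simp [F, expDistMatrix, dist_eq_one_iff_adj.mpr hvu.symm]
    ring
  · congr 1
    ext x y
    simp [updateRow_ne x.2, F]

theorem IsTree.det_expDistMatrix [Fintype V] [DecidableEq V] (hG : G.IsTree)
    (q : ℝ) : (expDistMatrix G q).det = (1 - q ^ 2) ^ (Fintype.card V - 1) := by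
  induction hn : Fintype.card V using Nat.strong_induction_on generalizing V with
  | _ n ih =>
    rcases subsingleton_or_nontrivial V with hV | hV
    · obtain ⟨k⟩ := hG.connected.nonempty
      have hn1 : n = 1 := hn ▸ Fintype.card_eq_one_iff.mpr ⟨k, fun x => Subsingleton.elim x k⟩
      simp [det_eq_elem_of_subsingleton _ k, expDistMatrix, hn1]
    · classical
      have hn2 : 1 < n := hn ▸ Fintype.one_lt_card
      obtain ⟨v, hv⟩ := hG.exists_vert_degree_one_of_nontrivial
      obtain ⟨u, hvu, hu⟩ := degree_eq_one_iff_existsUnique_adj.mp hv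
      have hcard : Fintype.card ({v}ᶜ : Set V) = n - 1 := by
        rw [Fintype.card_compl_set, hn, Set.card_singleton]
      rw [hG.connected.det_expDistMatrix_eq_mul_det_induce hvu hu,
        ih _ (by omega) (hG.induce_compl_singleton_of_degree_eq_one hv) hcard, ← pow_succ']
      congr 1
      omega

end SimpleGraph

theorem det_expDistMatrix_tree_general {V : Type*} [Fintype V] [DecidableEq V]
    (G : SimpleGraph V) (hG : G.IsTree) (n : ℕ) (hn : Fintype.card V = n)
    (q : ℝ) :
    (expDistMatrix G q).det = (1 - q ^ 2) ^ (n - 1) :=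
  hn ▸ hG.det_expDistMatrix q

/-- For a tree on `n` vertices, `det 𝓕 = (1-q²)^(n-1)`. -/
theorem det_expDistMatrix_tree {V : Type*} [Fintype V] [DecidableEq V]
    (G : SimpleGraph V) (hG : G.IsTree) (n : ℕ) (hn : Fintype.card V = n)
    (q : ℝ) (hq0 : q ≠ 0) (hq1 : q ≠ 1) (hq1' : q ≠ -1) :
    (expDistMatrix G q).det = (1 - q ^ 2) ^ (n - 1) :=
  det_expDistMatrix_tree_general G hG n hn q
end

section
/- Let 𝓕 be the exponential distance matrix of K_{s,t} with q ≠ ±1 and q²(s−1)(t−1) ≠ 1, and define the q-Laplacian 𝓛 = diag(x) + q(qB − A), where for a vertex v in part X, x(v) = (1 − q²(s−2)(t−1))/(1 − q²(s−1)(t−1)) and for v in part Y, x(v) = (1 − q²(s−1)(t−2))/(1 − q²(s−1)(t−1)); A assigns 1/(1 − q²(s−1)(t−1)) to each adjacent pair and 0 otherwise; and B assigns (t−1)/(1 − q²(s−1)(t−1)) to distinct non-adjacent pairs in X, (s−1)/(1 − q²(s−1)(t−1)) to distinct non-adjacent pairs in Y, and 0 otherwise. Then 𝓕⁻¹ = (1/(1−q²))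 𝓛. -/
/-- The weighted adjacency matrix `A` of `K_{s,t}`: each adjacent (cross) pair gets
`1/(1-q²(s-1)(t-1))`, all other entries are `0`. -/
noncomputable def ktA (s t : ℕ) (q : ℝ) : Matrix (Fin s ⊕ Fin t) (Fin s ⊕ Fin t) ℝ :=
  Matrix.of fun u v =>
    match u, v with
    | Sum.inl _, Sum.inr _ => 1 / (1 - q ^ 2 * ((s : ℝ) - 1) * ((t : ℝ) - 1))
    | Sum.inr _, Sum.inl _ => 1 / (1 - q ^ 2 * ((s : ℝ) - 1) * ((t : ℝ) - 1))
    | _, _ => 0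

/-- The matrix `B` of `K_{s,t}`: distinct non-adjacent pairs in `X` get
`(t-1)/(1-q²(s-1)(t-1))`, distinct non-adjacent pairs in `Y` get
`(s-1)/(1-q²(s-1)(t-1))`, all other entries are `0`. -/
noncomputable def ktB (s t : ℕ) (q : ℝ) : Matrix (Fin s ⊕ Fin t) (Fin s ⊕ Fin t) ℝ :=
  Matrix.of fun u v =>
    match u, v with
    | Sum.inl i, Sum.inl i' =>
        if i = i' then 0 else ((t : ℝ) - 1) / (1 - q ^ 2 * ((s : ℝ) - 1) * ((t : ℝ) - 1))
    | Sum.inr j, Sum.inr j' =>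
        if j = j' then 0 else ((s : ℝ) - 1) / (1 - q ^ 2 * ((s : ℝ) - 1) * ((t : ℝ) - 1))
    | _, _ => 0

/-- The diagonal vector `x` of the `q`-Laplacian of `K_{s,t}`. -/
noncomputable def ktx (s t : ℕ) (q : ℝ) : Fin s ⊕ Fin t → ℝ := fun u =>
  match u with
  | Sum.inl _ =>
      (1 - q ^ 2 * ((s : ℝ) - 2) * ((t : ℝ) - 1))
        / (1 - q ^ 2 * ((s : ℝ) - 1) * ((t : ℝ) - 1))
  | Sum.inr _ =>
      (1 - q ^ 2 * ((s : ℝ) - 1) * ((t : ℝ) - 2))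
        / (1 - q ^ 2 * ((s : ℝ) - 1) * ((t : ℝ) - 1))

/-- The `q`-Laplacian of `K_{s,t}`: `𝓛 = diag(x) + q(qB - A)`. -/
noncomputable def ktqLaplacian (s t : ℕ) (q : ℝ) : Matrix (Fin s ⊕ Fin t) (Fin s ⊕ Fin t) ℝ :=
  Matrix.diagonal (ktx s t q) + q • (q • ktB s t q - ktA s t q)

lemma kt_sum_ii {n : ℕ} (i j : Fin n) (a b c d : ℝ) :
    ∑ k : Fin n, (if i = k then a else b) * (if k = j then c else d)
      = n * (b * d) + b * (c - d) + (a - b) * d + (if i = j then (a - b) * (c - d) else 0) := by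
  have h : ∀ k : Fin n, (if i = k then a else b) * (if k = j then c else d)
      = b * d + (if k = j then b * (c - d) else 0) + (if i = k then (a - b) * d else 0)
        + (if i = k then (if k = j then (a - b) * (c - d) else 0) else 0) := by
    intro k
    by_cases h1 : i = k <;> by_cases h2 : k = j
    · simp [h1, h2]; ring
    · simp [h1, h2, h1 ▸ h2]; ring
    · simp [h1, h2, h2 ▸ h1]; ring
    · simp [h1, h2]
  simp only [h, Finset.sum_add_distrib, Finset.sum_const, Finset.sum_ite_eq, Finset.sum_ite_eq',
    Finset.mem_univ, if_true, Finset.card_univ, Fintype.card_fin, nsmul_eq_mul]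

lemma kt_sum_ci {n : ℕ} (i : Fin n) (a b c : ℝ) :
    ∑ k : Fin n, (if i = k then a else b) * c = n * (b * c) + (a - b) * c := by
  have h : ∀ k : Fin n, (if i = k then a else b) * c
      = b * c + (if i = k then (a - b) * c else 0) := by
    intro k; by_cases h1 : i = k <;> simp [h1] <;> ring
  simp only [h, Finset.sum_add_distrib, Finset.sum_const, Finset.sum_ite_eq,
    Finset.mem_univ, if_true, Finset.card_univ, Fintype.card_fin, nsmul_eq_mul]

lemma kt_sum_ic {n : ℕ} (j : Fin n) (c a b : ℝ) :
    ∑ k : Fin n, c * (if k = j then a else b) = n * (c * b) + c * (a - b) := by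
  have h : ∀ k : Fin n, c * (if k = j then a else b)
      = c * b + (if k = j then c * (a - b) else 0) := by
    intro k; by_cases h1 : k = j <;> simp [h1] <;> ring
  simp only [h, Finset.sum_add_distrib, Finset.sum_const, Finset.sum_ite_eq',
    Finset.mem_univ, if_true, Finset.card_univ, Fintype.card_fin, nsmul_eq_mul]

lemma kt_dist_ll {s t : ℕ} (ht : 0 < t) (i i' : Fin s) (hne : i ≠ i') :
    (completeBipartiteGraph (Fin s) (Fin t)).dist (Sum.inl i) (Sum.inl i') = 2 := by
  have hadj1 : (completeBipartiteGraph (Fin s) (Fin t)).Adj (Sum.inl i) (Sum.inr ⟨0, ht⟩) := by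
    simp
  have hadj2 : (completeBipartiteGraph (Fin s) (Fin t)).Adj (Sum.inr ⟨0, ht⟩) (Sum.inl i') := by
    simp
  have h2 : (completeBipartiteGraph (Fin s) (Fin t)).dist (Sum.inl i) (Sum.inl i') ≤ 2 := by
    have := SimpleGraph.dist_le (hadj1.toWalk.append hadj2.toWalk)
    simpa using this
  have h0 : (completeBipartiteGraph (Fin s) (Fin t)).dist (Sum.inl i) (Sum.inl i') ≠ 0 := by
    rw [SimpleGraph.dist_ne_zero_iff_ne_and_reachable]
    exact ⟨by simpa using hne, ⟨hadj1.toWalk.append hadj2.toWalk⟩⟩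
  have h1 : (completeBipartiteGraph (Fin s) (Fin t)).dist (Sum.inl i) (Sum.inl i') ≠ 1 := by
    intro h
    rw [SimpleGraph.dist_eq_one_iff_adj] at h
    simp at h
  omega

lemma kt_dist_rr {s t : ℕ} (hs : 0 < s) (j j' : Fin t) (hne : j ≠ j') :
    (completeBipartiteGraph (Fin s) (Fin t)).dist (Sum.inr j) (Sum.inr j') = 2 := by
  have hadj1 : (completeBipartiteGraph (Fin s) (Fin t)).Adj (Sum.inr j) (Sum.inl ⟨0, hs⟩) := by
    simp
  have hadj2 : (completeBipartiteGraph (Fin s) (Fin t)).Adj (Sum.inl ⟨0, hs⟩) (Sum.inr j') := by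
    simp
  have h2 : (completeBipartiteGraph (Fin s) (Fin t)).dist (Sum.inr j) (Sum.inr j') ≤ 2 := by
    have := SimpleGraph.dist_le (hadj1.toWalk.append hadj2.toWalk)
    simpa using this
  have h0 : (completeBipartiteGraph (Fin s) (Fin t)).dist (Sum.inr j) (Sum.inr j') ≠ 0 := by
    rw [SimpleGraph.dist_ne_zero_iff_ne_and_reachable]
    exact ⟨by simpa using hne, ⟨hadj1.toWalk.append hadj2.toWalk⟩⟩
  have h1 : (completeBipartiteGraph (Fin s) (Fin t)).dist (Sum.inr j) (Sum.inr j') ≠ 1 := by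
    intro h
    rw [SimpleGraph.dist_eq_one_iff_adj] at h
    simp at h
  omega

lemma kt_dist_lr {s t : ℕ} (i : Fin s) (j : Fin t) :
    (completeBipartiteGraph (Fin s) (Fin t)).dist (Sum.inl i) (Sum.inr j) = 1 := by
  rw [SimpleGraph.dist_eq_one_iff_adj]; simp

lemma kt_dist_rl {s t : ℕ} (i : Fin s) (j : Fin t) :
    (completeBipartiteGraph (Fin s) (Fin t)).dist (Sum.inr j) (Sum.inl i) = 1 := by
  rw [SimpleGraph.dist_eq_one_iff_adj]; simp

/-- For `K_{s,t}` with `q ≠ ±1` and `q²(s-1)(t-1) ≠ 1`, `𝓕⁻¹ = (1/(1-q²)) 𝓛`. -/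
theorem inv_expDistMatrix_completeBipartite_eq_qLaplacian (s t : ℕ)
    (hs : 0 < s) (ht : 0 < t)
    (q : ℝ) (hq0 : q ≠ 0) (hq1 : q ≠ 1) (hq1' : q ≠ -1)
    (hq2 : q ^ 2 * ((s : ℝ) - 1) * ((t : ℝ) - 1) ≠ 1) :
    (expDistMatrix (completeBipartiteGraph (Fin s) (Fin t)) q)⁻¹
      = (1 / (1 - q ^ 2)) • ktqLaplacian s t q := by
  set D : ℝ := 1 - q ^ 2 * ((s : ℝ) - 1) * ((t : ℝ) - 1) with hD
  have hDne : D ≠ 0 := sub_ne_zero.mpr (Ne.symm hq2)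
  have h1q : (1 : ℝ) - q ^ 2 ≠ 0 := by
    have h1 : (1 : ℝ) - q ≠ 0 := sub_ne_zero.mpr hq1.symm
    have h2 : (1 : ℝ) + q ≠ 0 := fun h => hq1' (by linarith)
    intro h; apply mul_ne_zero h1 h2; nlinarith [h]
  clear_value D
  set K : ℝ := 1 / ((1 - q ^ 2) * D) with hK0
  have hK : ((1 - q ^ 2) * D) * K = 1 := by
    rw [hK0]
    field_simp
  clear_value K
  set F := expDistMatrix (completeBipartiteGraph (Fin s) (Fin t)) q with hF
  set M := (1 / (1 - q ^ 2)) • ktqLaplacian s t q with hM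
  -- entries of F
  have eFll : ∀ i k : Fin s, F (Sum.inl i) (Sum.inl k) = if i = k then 1 else q ^ 2 := by
    intro i k
    by_cases h : i = k
    · subst h; simp [hF, expDistMatrix, SimpleGraph.dist_self]
    · simp [hF, expDistMatrix, h, kt_dist_ll ht i k h]
  have eFrr : ∀ j k : Fin t, F (Sum.inr j) (Sum.inr k) = if j = k then 1 else q ^ 2 := by
    intro j k
    by_cases h : j = k
    · subst h; simp [hF, expDistMatrix, SimpleGraph.dist_self]
    · simp [hF, expDistMatrix, h, kt_dist_rr hs j k h]
  have eFlr : ∀ (i : Fin s) (j : Fin t), F (Sum.inl i) (Sum.inr j) = q := by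
    intro i j; simp [hF, expDistMatrix, kt_dist_lr i j]
  have eFrl : ∀ (i : Fin s) (j : Fin t), F (Sum.inr j) (Sum.inl i) = q := by
    intro i j; simp [hF, expDistMatrix, kt_dist_rl i j]
  -- entries of M
  have hDiv : ∀ a : ℝ, (1 / (1 - q ^ 2)) * (a / D) = a * K := by
    intro a
    rw [hK0, one_div, one_div, mul_inv]
    ring
  have eMll : ∀ k i' : Fin s, M (Sum.inl k) (Sum.inl i')
      = if k = i' then (1 - q ^ 2 * ((s : ℝ) - 2) * ((t : ℝ) - 1)) * K
        else (q ^ 2 * ((t : ℝ) - 1)) * K := by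
    intro k i'
    by_cases h : k = i'
    · subst h
      simp only [hM, ktqLaplacian, ktA, ktB, ktx, Matrix.smul_apply, Matrix.add_apply,
        Matrix.sub_apply, Matrix.diagonal_apply_eq, Matrix.of_apply, smul_eq_mul, ← hD,
        eq_self_iff_true, if_true]
      rw [show (1 / (1 - q ^ 2)) * ((1 - q ^ 2 * ((s : ℝ) - 2) * ((t : ℝ) - 1)) / D
            + q * (q * 0 - 0)) = (1 / (1 - q ^ 2)) *
              ((1 - q ^ 2 * ((s : ℝ) - 2) * ((t : ℝ) - 1)) / D) by ring, hDiv]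
    · simp only [hM, ktqLaplacian, ktA, ktB, ktx, Matrix.smul_apply, Matrix.add_apply,
        Matrix.sub_apply, Matrix.diagonal_apply, Matrix.of_apply, smul_eq_mul, ← hD,
        Sum.inl.injEq, h, if_false]
      rw [show (1 / (1 - q ^ 2)) * (0 + q * (q * (((t : ℝ) - 1) / D) - 0))
            = (1 / (1 - q ^ 2)) * ((q ^ 2 * ((t : ℝ) - 1)) / D) by ring, hDiv]
  have eMrr : ∀ k j' : Fin t, M (Sum.inr k) (Sum.inr j')
      = if k = j' then (1 - q ^ 2 * ((s : ℝ) - 1) * ((t : ℝ) - 2)) * K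
        else (q ^ 2 * ((s : ℝ) - 1)) * K := by
    intro k j'
    by_cases h : k = j'
    · subst h
      simp only [hM, ktqLaplacian, ktA, ktB, ktx, Matrix.smul_apply, Matrix.add_apply,
        Matrix.sub_apply, Matrix.diagonal_apply_eq, Matrix.of_apply, smul_eq_mul, ← hD,
        eq_self_iff_true, if_true]
      rw [show (1 / (1 - q ^ 2)) * ((1 - q ^ 2 * ((s : ℝ) - 1) * ((t : ℝ) - 2)) / D
            + q * (q * 0 - 0)) = (1 / (1 - q ^ 2)) *
              ((1 - q ^ 2 * ((s : ℝ) - 1) * ((t : ℝ) - 2)) / D) by ring, hDiv]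
    · simp only [hM, ktqLaplacian, ktA, ktB, ktx, Matrix.smul_apply, Matrix.add_apply,
        Matrix.sub_apply, Matrix.diagonal_apply, Matrix.of_apply, smul_eq_mul, ← hD,
        Sum.inr.injEq, h, if_false]
      rw [show (1 / (1 - q ^ 2)) * (0 + q * (q * (((s : ℝ) - 1) / D) - 0))
            = (1 / (1 - q ^ 2)) * ((q ^ 2 * ((s : ℝ) - 1)) / D) by ring, hDiv]
  have eMlr : ∀ (k : Fin s) (j : Fin t), M (Sum.inl k) (Sum.inr j) = (-q) * K := by
    intro k j
    simp only [hM, ktqLaplacian, ktA, ktB, ktx, Matrix.smul_apply, Matrix.add_apply,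
      Matrix.sub_apply, Matrix.diagonal_apply, Matrix.of_apply, smul_eq_mul, ← hD,
      reduceCtorEq, if_false]
    rw [show (1 / (1 - q ^ 2)) * (0 + q * (q * 0 - 1 / D))
          = (1 / (1 - q ^ 2)) * ((-q) / D) by ring, hDiv]
  have eMrl : ∀ (k : Fin s) (j : Fin t), M (Sum.inr j) (Sum.inl k) = (-q) * K := by
    intro k j
    simp only [hM, ktqLaplacian, ktA, ktB, ktx, Matrix.smul_apply, Matrix.add_apply,
      Matrix.sub_apply, Matrix.diagonal_apply, Matrix.of_apply, smul_eq_mul, ← hD,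
      reduceCtorEq, if_false]
    rw [show (1 / (1 - q ^ 2)) * (0 + q * (q * 0 - 1 / D))
          = (1 / (1 - q ^ 2)) * ((-q) / D) by ring, hDiv]
  have hK' : ((1 - q ^ 2) * (1 - q ^ 2 * ((s : ℝ) - 1) * ((t : ℝ) - 1))) * K = 1 := by
    rw [← hD]; exact hK
  apply Matrix.inv_eq_right_inv
  show F * M = 1
  ext u v
  rw [Matrix.mul_apply, Fintype.sum_sum_type]
  cases u with
  | inl i =>
    cases v with
    | inl i' =>
      have e1 : ∀ k : Fin s, F (Sum.inl i) (Sum.inl k) * M (Sum.inl k) (Sum.inl i')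
          = (if i = k then (1:ℝ) else q ^ 2) *
            (if k = i' then (1 - q ^ 2 * ((s : ℝ) - 2) * ((t : ℝ) - 1)) * K
              else (q ^ 2 * ((t : ℝ) - 1)) * K) := by
        intro k; rw [eFll, eMll]
      have e2 : ∀ j : Fin t, F (Sum.inl i) (Sum.inr j) * M (Sum.inr j) (Sum.inl i')
          = q * ((-q) * K) := by
        intro j; rw [eFlr, eMrl]
      simp only [e1, e2, kt_sum_ii, Finset.sum_const, Finset.card_univ, Fintype.card_fin,
        nsmul_eq_mul, Matrix.one_apply, Sum.inl.injEq]
      by_cases h : i = i'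
      · simp only [h, if_true]
        linear_combination hK'
      · simp only [h, if_false]
        ring
    | inr j =>
      have e1 : ∀ k : Fin s, F (Sum.inl i) (Sum.inl k) * M (Sum.inl k) (Sum.inr j)
          = (if i = k then (1:ℝ) else q ^ 2) * ((-q) * K) := by
        intro k; rw [eFll, eMlr]
      have e2 : ∀ j' : Fin t, F (Sum.inl i) (Sum.inr j') * M (Sum.inr j') (Sum.inr j)
          = q * (if j' = j then (1 - q ^ 2 * ((s : ℝ) - 1) * ((t : ℝ) - 2)) * K
              else (q ^ 2 * ((s : ℝ) - 1)) * K) := by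
        intro j'; rw [eFlr, eMrr]
      simp only [e1, e2, kt_sum_ci, kt_sum_ic, Matrix.one_apply, reduceCtorEq, if_false]
      ring
  | inr j =>
    cases v with
    | inl i' =>
      have e1 : ∀ k : Fin s, F (Sum.inr j) (Sum.inl k) * M (Sum.inl k) (Sum.inl i')
          = q * (if k = i' then (1 - q ^ 2 * ((s : ℝ) - 2) * ((t : ℝ) - 1)) * K
              else (q ^ 2 * ((t : ℝ) - 1)) * K) := by
        intro k; rw [eFrl, eMll]
      have e2 : ∀ j' : Fin t, F (Sum.inr j) (Sum.inr j') * M (Sum.inr j') (Sum.inl i')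
          = (if j = j' then (1:ℝ) else q ^ 2) * ((-q) * K) := by
        intro j'; rw [eFrr, eMrl]
      simp only [e1, e2, kt_sum_ci, kt_sum_ic, Matrix.one_apply, reduceCtorEq, if_false]
      ring
    | inr j' =>
      have e1 : ∀ k : Fin s, F (Sum.inr j) (Sum.inl k) * M (Sum.inl k) (Sum.inr j')
          = q * ((-q) * K) := by
        intro k; rw [eFrl, eMlr]
      have e2 : ∀ k : Fin t, F (Sum.inr j) (Sum.inr k) * M (Sum.inr k) (Sum.inr j')
          = (if j = k then (1:ℝ) else q ^ 2) *
            (if k = j' then (1 - q ^ 2 * ((s : ℝ) - 1) * ((t : ℝ) - 2)) * K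
              else (q ^ 2 * ((s : ℝ) - 1)) * K) := by
        intro k; rw [eFrr, eMrr]
      simp only [e1, e2, kt_sum_ii, Finset.sum_const, Finset.card_univ, Fintype.card_fin,
        nsmul_eq_mul, Matrix.one_apply, Sum.inr.injEq]
      by_cases h : j = j'
      · simp only [h, if_true]
        linear_combination hK'
      · simp only [h, if_false]
        ring
end

section
/- Let T be a tree on n vertices with Laplacian matrix L and degree vector d, and set z = d − 𝟙. Define the q-Laplacian 𝓛 = qL − (q−1)I + q(q−1)diag(z). Then for any nonzero q with q ≠ ±1, the exponential distance matrix 𝓕 of T satisfies 𝓕⁻¹ = (1/(1−q²)) 𝓛. -/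
namespace SimpleGraph

variable {V : Type*} {G : SimpleGraph V}

theorem IsTree.existsUnique_adj_dist_add_one_eq (hG : G.IsTree) {u v : V} (huv : u ≠ v) :
    ∃! w, G.Adj v w ∧ G.dist u w + 1 = G.dist u v := by
  obtain ⟨p, hp⟩ := hG.connected.exists_walk_length_eq_dist u v
  have hpNil : ¬p.Nil := fun h => huv h.eq
  refine ⟨p.penultimate, ⟨(p.adj_penultimate hpNil).symm, ?_⟩, ?_⟩
  · have hle : G.dist u p.penultimate ≤ p.length - 1 := p.length_dropLast ▸ dist_le p.dropLast
    have hstep := hG.dist_eq_dist_add_one_of_adj u (p.adj_penultimate hpNil)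
    omega
  · rintro w ⟨hadj, hw⟩
    obtain ⟨r, hr⟩ := hG.connected.exists_walk_length_eq_dist u w
    have hrPath : (r.concat hadj.symm).IsPath :=
      (r.concat hadj.symm).isPath_of_length_eq_dist (by rw [Walk.length_concat, hr, hw])
    have hpPath : p.IsPath := p.isPath_of_length_eq_dist hp
    have hsame := (hG.isAcyclic.subsingleton_path u v).elim ⟨_, hrPath⟩ ⟨p, hpPath⟩
    rw [← r.penultimate_concat hadj.symm]
    exact congrArg (fun P : G.Path u v => P.1.penultimate) hsame

theorem IsTree.sum_neighborFinset_dist [Fintype V] [DecidableRel G.Adj] {R : Type*} [Ring R]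
    (hG : G.IsTree) {u v : V} (huv : u ≠ v) (f : ℕ → R) :
    ∑ w ∈ G.neighborFinset v, f (G.dist u w)
      = f (G.dist u v - 1) + ((G.degree v : R) - 1) * f (G.dist u v + 1) := by
  classical
  obtain ⟨w₀, ⟨hadj₀, hw₀⟩, huniq⟩ := hG.existsUnique_adj_dist_add_one_eq huv
  have hmem : w₀ ∈ G.neighborFinset v := (G.mem_neighborFinset v w₀).mpr hadj₀
  have hchild : ∀ w ∈ (G.neighborFinset v).erase w₀, f (G.dist u w) = f (G.dist u v + 1) := by
    intro w hw
    obtain ⟨hne, hadj⟩ := Finset.mem_erase.mp hw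
    rw [mem_neighborFinset] at hadj
    have hstep := hG.dist_eq_dist_add_one_of_adj u hadj
    have hnotCloser : G.dist u w + 1 ≠ G.dist u v := fun h => hne (huniq w ⟨hadj, h⟩)
    congr 1
    omega
  rw [← Finset.add_sum_erase _ _ hmem, Finset.sum_congr rfl hchild, Finset.sum_const,
    Finset.card_erase_of_mem hmem, card_neighborFinset_eq_degree, nsmul_eq_mul,
    Nat.cast_pred (G.degree_pos_iff_exists_adj v |>.mpr ⟨w₀, hadj₀⟩)]
  congr 2
  omega

end SimpleGraph

open SimpleGraph

noncomputable def qLaplacian {V : Type*} [Fintype V] [DecidableEq V] (G : SimpleGraph V)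
    [DecidableRel G.Adj] (q : ℝ) : Matrix V V ℝ :=
  q • G.lapMatrix ℝ - (q - 1) • (1 : Matrix V V ℝ)
    + (q * (q - 1)) • Matrix.diagonal (fun v => (G.degree v : ℝ) - 1)

theorem qLaplacian_eq {V : Type*} [Fintype V] [DecidableEq V] (G : SimpleGraph V)
    [DecidableRel G.Adj] (q : ℝ) :
    qLaplacian G q = 1 + q ^ 2 • Matrix.diagonal (fun v => (G.degree v : ℝ) - 1)
      - q • G.adjMatrix ℝ := by
  ext u v
  simp only [qLaplacian, lapMatrix, degMatrix, Matrix.add_apply, Matrix.sub_apply,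
    Matrix.smul_apply, Matrix.diagonal_apply, Matrix.one_apply, adjMatrix_apply, smul_eq_mul]
  rcases eq_or_ne u v with rfl | h
  · simp only [if_true, G.irrefl, if_false]
    ring
  · simp only [if_neg h]
    ring

theorem expDistMatrix_mul_qLaplacian {V : Type*} [Fintype V] [DecidableEq V]
    {G : SimpleGraph V} [DecidableRel G.Adj] (hG : G.IsTree) (q : ℝ) :
    expDistMatrix G q * qLaplacian G q = (1 - q ^ 2) • 1 := by
  ext u v
  simp only [qLaplacian_eq, Matrix.mul_sub, Matrix.mul_add, Matrix.mul_smul, Matrix.mul_one,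
    Matrix.sub_apply, Matrix.add_apply, Matrix.smul_apply, Matrix.mul_diagonal,
    mul_adjMatrix_apply, expDistMatrix, Matrix.of_apply, Matrix.one_apply, smul_eq_mul]
  rcases eq_or_ne u v with rfl | huv
  · have hnbr : ∀ w ∈ G.neighborFinset u, q ^ G.dist u w = q := fun w hw => by
      rw [dist_eq_one_iff_adj.mpr ((G.mem_neighborFinset u w).mp hw), pow_one]
    rw [Finset.sum_congr rfl hnbr, Finset.sum_const, card_neighborFinset_eq_degree, nsmul_eq_mul,
      dist_self]
    simp only [pow_zero, one_mul, if_true]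
    ring
  · obtain ⟨k, hk⟩ : ∃ k, G.dist u v = k + 1 :=
      Nat.exists_eq_add_one.mpr (hG.connected.pos_dist_of_ne huv)
    rw [hG.sum_neighborFinset_dist huv, hk, if_neg huv]
    simp only [Nat.add_sub_cancel]
    ring

theorem inv_expDistMatrix_tree_eq_qLaplacian_general {V : Type*} [Fintype V] [DecidableEq V]
    (G : SimpleGraph V) [DecidableRel G.Adj] (hG : G.IsTree)
    (q : ℝ) (hq1 : q ≠ 1) (hq1' : q ≠ -1) :
    (expDistMatrix G q)⁻¹
      = (1 / (1 - q ^ 2)) •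
          (q • G.lapMatrix ℝ - (q - 1) • (1 : Matrix V V ℝ)
            + (q * (q - 1)) • Matrix.diagonal (fun v => (G.degree v : ℝ) - 1)) := by
  have hq2 : 1 - q ^ 2 ≠ 0 := sub_ne_zero.mpr (sq_ne_one_iff.mpr ⟨hq1, hq1'⟩).symm
  apply Matrix.inv_eq_right_inv
  rw [← qLaplacian, Matrix.mul_smul, expDistMatrix_mul_qLaplacian hG, smul_smul, one_div,
    inv_mul_cancel₀ hq2, one_smul]

/-- For a tree `T` with Laplacian `L` and `z = d - 𝟙` (degrees minus one), setting
`𝓛 = qL - (q-1)I + q(q-1)diag(z)`, one has `𝓕⁻¹ = (1/(1-q²)) 𝓛`. -/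
theorem inv_expDistMatrix_tree_eq_qLaplacian {V : Type*} [Fintype V] [DecidableEq V]
    (G : SimpleGraph V) [DecidableRel G.Adj] (hG : G.IsTree)
    (q : ℝ) (hq0 : q ≠ 0) (hq1 : q ≠ 1) (hq1' : q ≠ -1) :
    (expDistMatrix G q)⁻¹
      = (1 / (1 - q ^ 2)) •
          (q • G.lapMatrix ℝ - (q - 1) • (1 : Matrix V V ℝ)
            + (q * (q - 1)) • Matrix.diagonal (fun v => (G.degree v : ℝ) - 1)) :=
  inv_expDistMatrix_tree_eq_qLaplacian_general G hG q hq1 hq1'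
end
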